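/- arXiv:2011.07582 — 4 statements merged into one kernel-verified Lean document; each statement's English description precedes it below -/
import Mathlib

section
/- Let M, n, k be nonnegative integers with 2k ≤ n ≤ M and M ≥ 2. Let 𝓜 be a set with M elements, 𝓝 ⊆ 𝓜 a subset with n elements, and 𝓣 = 𝓜^n the set of n-tuples with components in 𝓜. Then Σ_{x ∈ 𝓣} m_k(x)² = n(n−1)·C(n,k)·C(n−k,k)·(M−2)^(n−2k) + n·C(n,k)·(M−1)^(n−k). -/
/-!
Writing `m_k(x)² = Σ_{y, z ∈ 𝓝} [y and z both occur exactly k times in x]` and swapping sums,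
the left side becomes `Σ_{y, z ∈ 𝓝} #{x | y and z both occur exactly k times in x}`.
On the diagonal a tuple is fixed by the `k` positions holding `y` and an arbitrary filling of the
other `n - k` positions avoiding `y`: `C(n,k) (M-1)^(n-k)` tuples, for each of the `n` values `y`.
Off the diagonal it is fixed by two disjoint `k`-sets of positions and a filling of the remaining
`n - 2k` positions avoiding `y` and `z`: `C(n,k) C(n-k,k) (M-2)^(n-2k)` tuples, for each of the
`n(n-1)` ordered pairs.
-/

open Finset

lemma Finset.sum_card_filter_sq {β γ : Type*} (X : Finset β) (N : Finset γ) (P : β → γ → Prop)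
    [∀ x y, Decidable (P x y)] :
    ∑ x ∈ X, #{y ∈ N | P x y} ^ 2 = ∑ y ∈ N, ∑ z ∈ N, #{x ∈ X | P x y ∧ P x z} := by
  simp only [sq, card_filter, sum_mul_sum, ite_zero_mul_ite_zero, mul_one]
  rw [sum_comm]
  exact sum_congr rfl fun y _ => sum_comm

lemma Finset.sum_sum_eq_of_diag_of_offDiag {γ A : Type*} [DecidableEq γ] [AddCommMonoid A]
    (N : Finset γ) (f : γ → γ → A) {a b : A} (hdiag : ∀ y ∈ N, f y y = a)
    (hoff : ∀ y ∈ N, ∀ z ∈ N, y ≠ z → f y z = b) :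
    ∑ y ∈ N, ∑ z ∈ N, f y z = #N • (a + (#N - 1) • b) := by
  rw [← sum_const]
  refine sum_congr rfl fun y hy => ?_
  have hrow : ∀ z ∈ N.erase y, f y z = b := fun z hz =>
    hoff y hy z (mem_of_mem_erase hz) (ne_of_mem_erase hz).symm
  rw [← add_sum_erase _ _ hy, hdiag y hy, sum_congr rfl hrow, sum_const, card_erase_of_mem hy]

section Fibers

variable {ι α : Type*} [Fintype ι] [DecidableEq ι] [Fintype α] [DecidableEq α]

lemma filter_fiber_eq_piFinset (y : α) (s : Finset ι) :
    univ.filter (fun x : ι → α => univ.filter (x · = y) = s) =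
      Fintype.piFinset fun i => if i ∈ s then {y} else {y}ᶜ := by
  ext x
  simp only [mem_filter, mem_univ, true_and, Fintype.mem_piFinset, Finset.ext_iff]
  refine forall_congr' fun i => ?_
  by_cases hi : i ∈ s <;> simp [hi]

lemma filter_fiber_pair_eq_piFinset {y z : α} (hyz : y ≠ z) {s t : Finset ι}
    (hst : Disjoint s t) :
    univ.filter (fun x : ι → α => univ.filter (x · = y) = s ∧ univ.filter (x · = z) = t) =
      Fintype.piFinset fun i => if i ∈ s then {y} else if i ∈ t then {z} else {y, z}ᶜ := by
  ext x
  simp only [mem_filter, mem_univ, true_and, Fintype.mem_piFinset, Finset.ext_iff, ← forall_and]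
  refine forall_congr' fun i => ?_
  by_cases hs : i ∈ s
  · have ht : i ∉ t := disjoint_left.1 hst hs
    simp only [hs, ht, iff_true, iff_false, if_true, mem_singleton]
    exact ⟨And.left, fun h => ⟨h, h ▸ hyz⟩⟩
  · by_cases ht : i ∈ t
    · simp only [hs, ht, iff_true, iff_false, if_true, if_false, mem_singleton]
      exact ⟨And.right, fun h => ⟨h ▸ hyz.symm, h⟩⟩
    · simp only [hs, ht, iff_false, if_false, mem_compl, mem_insert, mem_singleton, not_or]

lemma card_filter_fiber_eq (y : α) (s : Finset ι) :
    #{x : ι → α | univ.filter (x · = y) = s} = (Fintype.card α - 1) ^ (Fintype.card ι - #s) := by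
  have hcard (i : ι) :
      #(if i ∈ s then {y} else ({y}ᶜ : Finset α)) = if i ∈ sᶜ then Fintype.card α - 1 else 1 := by
    by_cases hs : i ∈ s <;> simp [hs, card_compl]
  rw [filter_fiber_eq_piFinset, Fintype.card_piFinset]
  simp only [hcard, Fintype.prod_ite_mem, prod_const, card_compl]

lemma card_filter_fiber_pair_eq {y z : α} (hyz : y ≠ z) {s t : Finset ι} (hst : Disjoint s t) :
    #{x : ι → α | univ.filter (x · = y) = s ∧ univ.filter (x · = z) = t} =
      (Fintype.card α - 2) ^ (Fintype.card ι - #s - #t) := by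
  have hcard (i : ι) :
      #(if i ∈ s then {y} else if i ∈ t then {z} else ({y, z}ᶜ : Finset α)) =
        if i ∈ (s ∪ t)ᶜ then Fintype.card α - 2 else 1 := by
    by_cases hs : i ∈ s
    · simp [hs]
    by_cases ht : i ∈ t
    · simp [hs, ht]
    rw [if_neg hs, if_neg ht, if_pos (by simp [hs, ht]), card_compl, card_pair hyz]
  rw [filter_fiber_pair_eq_piFinset hyz hst, Fintype.card_piFinset]
  simp only [hcard, Fintype.prod_ite_mem, prod_const, card_compl, card_union_of_disjoint hst,
    Nat.sub_sub]

lemma card_filter_card_fiber_eq (y : α) (k : ℕ) :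
    #{x : ι → α | #(univ.filter (x · = y)) = k} =
      (Fintype.card ι).choose k * (Fintype.card α - 1) ^ (Fintype.card ι - k) := by
  calc #{x : ι → α | #(univ.filter (x · = y)) = k}
      = ∑ s ∈ powersetCard k univ, #{x : ι → α | univ.filter (x · = y) = s} := by
        simp only [sum_card_fiberwise_eq_card_filter, mem_powersetCard_univ]
    _ = ∑ s ∈ powersetCard k univ, (Fintype.card α - 1) ^ (Fintype.card ι - k) :=
        sum_congr rfl fun s hs => by rw [card_filter_fiber_eq, mem_powersetCard_univ.1 hs]
    _ = (Fintype.card ι).choose k * (Fintype.card α - 1) ^ (Fintype.card ι - k) := by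
        rw [sum_const, card_powersetCard, card_univ, smul_eq_mul]

lemma card_filter_card_fiber_pair_eq {y z : α} (hyz : y ≠ z) (k l : ℕ) :
    #{x : ι → α | #(univ.filter (x · = y)) = k ∧ #(univ.filter (x · = z)) = l} =
      (Fintype.card ι).choose k * (Fintype.card ι - k).choose l *
        (Fintype.card α - 2) ^ (Fintype.card ι - k - l) := by
  calc #{x : ι → α | #(univ.filter (x · = y)) = k ∧ #(univ.filter (x · = z)) = l}
      = ∑ s ∈ powersetCard k univ, ∑ t ∈ powersetCard l univ,
          #{x : ι → α | univ.filter (x · = y) = s ∧ univ.filter (x · = z) = t} := by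
        have := sum_card_fiberwise_eq_card_filter univ
          (powersetCard k univ ×ˢ powersetCard l univ)
          fun x : ι → α => (univ.filter (x · = y), univ.filter (x · = z))
        simp only [Prod.ext_iff, mem_product, mem_powersetCard_univ, sum_product] at this
        exact this.symm
    _ = ∑ s ∈ powersetCard k univ, ∑ t ∈ powersetCard l sᶜ,
          #{x : ι → α | univ.filter (x · = y) = s ∧ univ.filter (x · = z) = t} := by
        refine sum_congr rfl fun s _ => (sum_subset (powersetCard_mono (subset_univ _)) ?_).symm
        -- the fibres of `y ≠ z` are disjoint, so no tuple lies over a non-disjoint pair `(s, t)`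
        intro t ht hts
        rw [Finset.card_eq_zero, filter_eq_empty_iff]
        rintro x - ⟨rfl, rfl⟩
        exact hts (mem_powersetCard.2 ⟨subset_compl_iff_disjoint_left.2
          (disjoint_filter.2 fun i _ hy hz => hyz (hy.symm.trans hz)), mem_powersetCard_univ.1 ht⟩)
    _ = ∑ s ∈ powersetCard k univ,
          (Fintype.card ι - k).choose l * (Fintype.card α - 2) ^ (Fintype.card ι - k - l) := by
        refine sum_congr rfl fun s hs => ?_
        rw [mem_powersetCard_univ] at hs
        have hfiber : ∀ t ∈ powersetCard l sᶜ,
            #{x : ι → α | univ.filter (x · = y) = s ∧ univ.filter (x · = z) = t} =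
              (Fintype.card α - 2) ^ (Fintype.card ι - k - l) := by
          intro t ht
          rw [mem_powersetCard, subset_compl_iff_disjoint_left] at ht
          rw [card_filter_fiber_pair_eq hyz ht.1, hs, ht.2]
        rw [sum_congr rfl hfiber, sum_const, card_powersetCard, card_compl, hs, smul_eq_mul]
    _ = (Fintype.card ι).choose k * (Fintype.card ι - k).choose l *
          (Fintype.card α - 2) ^ (Fintype.card ι - k - l) := by
        rw [sum_const, card_powersetCard, card_univ, smul_eq_mul, mul_assoc]

end Fibers

theorem sum_mk_sq_eq_general (M n k : ℕ)
    (𝓝 : Finset (Fin M)) (h𝓝 : 𝓝.card = n) :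
    (∑ x : Fin n → Fin M,
        ((𝓝.filter (fun y =>
          (Finset.univ.filter (fun i : Fin n => x i = y)).card = k)).card) ^ 2)
      = n * (n - 1) * n.choose k * (n - k).choose k * (M - 2) ^ (n - 2 * k)
        + n * n.choose k * (M - 1) ^ (n - k) := by
  rw [sum_card_filter_sq, sum_sum_eq_of_diag_of_offDiag _ _ (a := n.choose k * (M - 1) ^ (n - k))
    (b := n.choose k * (n - k).choose k * (M - 2) ^ (n - 2 * k))]
  · rw [h𝓝, smul_eq_mul, smul_eq_mul]
    ring
  · intro y _
    simp only [and_self, card_filter_card_fiber_eq, Fintype.card_fin]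
  · intro y _ z _ hyz
    rw [card_filter_card_fiber_pair_eq hyz, Fintype.card_fin, Fintype.card_fin, Nat.sub_sub,
      ← two_mul]

/-- For `2k ≤ n ≤ M`, `M ≥ 2`, a set `𝓜` with `M` elements and a subset `𝓝 ⊆ 𝓜` with `n`
elements, the sum over all `n`-tuples `x` with components in `𝓜` of `m_k(x)²` (where `m_k(x)`
is the number of elements of `𝓝` represented exactly `k` times in `x`) equals
`n(n-1) C(n,k) C(n-k,k) (M-2)^(n-2k) + n C(n,k) (M-1)^(n-k)`. -/
theorem sum_mk_sq_eq (M n k : ℕ) (hk : 2 * k ≤ n) (hnM : n ≤ M) (hM : 2 ≤ M)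
    (𝓝 : Finset (Fin M)) (h𝓝 : 𝓝.card = n) :
    (∑ x : Fin n → Fin M,
        ((𝓝.filter (fun y =>
          (Finset.univ.filter (fun i : Fin n => x i = y)).card = k)).card) ^ 2)
      = n * (n - 1) * n.choose k * (n - k).choose k * (M - 2) ^ (n - 2 * k)
        + n * n.choose k * (M - 1) ^ (n - k) :=
  sum_mk_sq_eq_general M n k 𝓝 h𝓝
end

section
/- For every real c > 0 there exist a constant C > 0 and a threshold N such that the following holds uniformly: for every real λ ∈ (0,1], every real γ ∈ [0,1), every a ∈ {1,2}, and all integers k, n, M with k ≤ n ≤ M, n ≥ N, M ≥ 3, and |M − n/λ| ≤ c·n^γ, one has |(1 − a/M)^(n−k) − e^{−aλ}| ≤ C · e^{−aλ} · (λ²·n^{γ−1} + λ·k·n^{−1}). -/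
/-! Write `(1 - a/M)^(n-k) = e^(-aλ) e^D` with `D = (n - k) log (1 - a/M) + aλ`.
Since `log (1 - x) = -x + O(x²)`, `D` splits into `aλ - na/M`, which is `O(λ² n^(γ-1))`
because `M` lies within `c n^γ` of `n/λ`, the term `ka/M = O(λk/n)`, and a remainder
`O(n/M²) = O(λ²/n)`; all three only need `n/M ≤ (1 + c) λ`. The resulting bound on `|D|`
is itself `O(1)`, so `|e^D - 1| ≤ |D| e^|D|` turns it into the estimate. -/

open Real

lemma abs_exp_sub_one_le_abs_mul_exp (t : ℝ) : |exp t - 1| ≤ |t| * exp |t| := by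
  have h := Complex.norm_exp_sub_sum_le_norm_mul_exp t 1
  simp only [Finset.range_one, Finset.sum_singleton, pow_zero, Nat.factorial_zero, Nat.cast_one,
    div_one, pow_one, Complex.norm_real, Real.norm_eq_abs] at h
  exact_mod_cast h

lemma abs_log_one_sub_add_le {x : ℝ} (hx : |x| ≤ 2 / 3) : |log (1 - x) + x| ≤ 3 * x ^ 2 := by
  have h := abs_log_sub_add_sum_range_le (hx.trans_lt (by norm_num)) 1
  rw [Finset.sum_range_one, add_comm] at h
  norm_num at h
  calc |log (1 - x) + x| ≤ x ^ 2 / (1 - |x|) := h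
    _ ≤ 3 * x ^ 2 := by
      rw [div_le_iff₀ (by linarith)]
      nlinarith [sq_nonneg x]

section Deviation

variable {c K lam γ a k n M : ℝ}

lemma inv_le_one_add_mul_div_of_abs_sub_div_le (hc : 0 ≤ c) (hlam : 0 < lam) (hγ : γ ≤ 1)
    (hn : 1 ≤ n) (hnM : n ≤ M) (h : |M - n / lam| ≤ c * n ^ γ) :
    M⁻¹ ≤ (1 + c) * lam / n := by
  have hnγ : n ^ γ ≤ n := by
    simpa using rpow_le_rpow_of_exponent_le hn hγ
  have : n / lam ≤ (1 + c) * M := by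
    nlinarith [(abs_le.1 h).1]
  rw [div_le_iff₀ hlam] at this
  rw [inv_eq_one_div, div_le_div_iff₀ (by linarith) (by linarith)]
  linarith

lemma abs_mul_sub_mul_div_le (ha : 0 ≤ a) (hlam : 0 < lam) (hn : 0 < n) (hM : 0 < M)
    (hinv : M⁻¹ ≤ K * lam / n) (h : |M - n / lam| ≤ c * n ^ γ) :
    |a * lam - n * (a / M)| ≤ a * c * K * (lam ^ 2 * n ^ (γ - 1)) := by
  have heq : a * lam - n * (a / M) = a * lam * M⁻¹ * (M - n / lam) := by
    field_simp
  rw [heq, abs_mul, abs_of_nonneg (by positivity), rpow_sub hn, rpow_one]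
  calc a * lam * M⁻¹ * |M - n / lam| ≤ a * lam * (K * lam / n) * (c * n ^ γ) := by
        gcongr
        exact mul_nonneg (by positivity) ((inv_pos.2 hM).le.trans hinv)
    _ = a * c * K * (lam ^ 2 * (n ^ γ / n)) := by ring

lemma mul_div_le_mul_div (ha : 0 ≤ a) (hk : 0 ≤ k) (hinv : M⁻¹ ≤ K * lam / n) :
    k * (a / M) ≤ a * K * (lam * k / n) := by
  calc k * (a / M) = a * k * M⁻¹ := by ring
    _ ≤ a * k * (K * lam / n) := by gcongr
    _ = a * K * (lam * k / n) := by ring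

lemma mul_div_sq_le (ha : 0 ≤ a) (hγ : 0 ≤ γ) (hn : 1 ≤ n) (hM : 0 < M)
    (hinv : M⁻¹ ≤ K * lam / n) :
    n * (a / M) ^ 2 ≤ a ^ 2 * K ^ 2 * (lam ^ 2 * n ^ (γ - 1)) := by
  have hnx : n * (a / M) ≤ a * K * lam := by
    calc n * (a / M) = a * n * M⁻¹ := by ring
      _ ≤ a * n * (K * lam / n) := by gcongr
      _ = a * K * lam := by field_simp
  have hn_inv : n⁻¹ ≤ n ^ (γ - 1) := by
    rw [← rpow_neg_one]
    exact rpow_le_rpow_of_exponent_le hn (by linarith)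
  calc n * (a / M) ^ 2 = (n * (a / M)) ^ 2 * n⁻¹ := by field_simp
    _ ≤ (a * K * lam) ^ 2 * n ^ (γ - 1) := by gcongr
    _ = a ^ 2 * K ^ 2 * (lam ^ 2 * n ^ (γ - 1)) := by ring

lemma abs_sub_mul_log_one_sub_div_add_le (hc : 0 ≤ c) (hlam : 0 < lam) (hγ0 : 0 ≤ γ)
    (hγ1 : γ ≤ 1) (ha : 0 ≤ a) (ha2 : a ≤ 2) (hk : 0 ≤ k) (hkn : k ≤ n) (hn : 1 ≤ n)
    (hnM : n ≤ M) (hM : 3 ≤ M) (h : |M - n / lam| ≤ c * n ^ γ) :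
    |(n - k) * log (1 - a / M) + a * lam|
      ≤ (2 * c * (1 + c) + 2 * (1 + c) + 12 * (1 + c) ^ 2)
          * (lam ^ 2 * n ^ (γ - 1) + lam * k / n) := by
  have hinv := inv_le_one_add_mul_div_of_abs_sub_div_le hc hlam hγ1 hn hnM h
  have hx : |a / M| ≤ 2 / 3 := by
    rw [abs_of_nonneg (by positivity), div_le_iff₀ (by linarith)]
    linarith
  have hr := abs_log_one_sub_add_le hx
  have hdecomp : (n - k) * log (1 - a / M) + a * lam
      = (a * lam - n * (a / M)) + k * (a / M) + (n - k) * (log (1 - a / M) + a / M) := by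
    ring
  have hdrift := abs_mul_sub_mul_div_le ha hlam (by linarith) (by linarith) hinv h
  have hshift := mul_div_le_mul_div ha hk hinv
  have hsq := mul_div_sq_le ha hγ0 hn (by linarith) hinv
  have hrem : (n - k) * |log (1 - a / M) + a / M| ≤ n * (3 * (a / M) ^ 2) :=
    mul_le_mul (by linarith) hr (abs_nonneg _) (by linarith)
  have hX : 0 ≤ lam ^ 2 * n ^ (γ - 1) := by positivity
  have hY : 0 ≤ lam * k / n := by positivity
  rw [hdecomp]
  calc _ ≤ |a * lam - n * (a / M)| + |k * (a / M)| + |(n - k) * (log (1 - a / M) + a / M)| :=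
        abs_add_three _ _ _
    _ = |a * lam - n * (a / M)| + k * (a / M) + (n - k) * |log (1 - a / M) + a / M| := by
        rw [abs_of_nonneg (by positivity : 0 ≤ k * (a / M)), abs_mul,
          abs_of_nonneg (by linarith : 0 ≤ n - k)]
    _ ≤ _ := by
        generalize lam ^ 2 * n ^ (γ - 1) = X at *
        generalize lam * k / n = Y at *
        have hK : 0 ≤ 1 + c := by linarith
        have hcK : 0 ≤ c * (1 + c) := by positivity
        nlinarith [mul_nonneg (mul_nonneg (sub_nonneg.2 ha2) hcK) hX,
          mul_nonneg (mul_nonneg (sub_nonneg.2 ha2) hK) hY,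
          mul_nonneg (mul_nonneg (by nlinarith : 0 ≤ 4 - a ^ 2) (sq_nonneg (1 + c))) hX,
          mul_nonneg hK hX, mul_nonneg hcK hY, mul_nonneg (sq_nonneg (1 + c)) hY]

end Deviation

lemma abs_pow_sub_exp_neg_le {x t B : ℝ} (hx : x < 1) (m : ℕ)
    (hB : |m * log (1 - x) + t| ≤ B) :
    |(1 - x) ^ m - exp (-t)| ≤ exp (-t) * (B * exp B) := by
  set D := m * log (1 - x) + t
  have hpow : (1 - x) ^ m = exp (-t) * exp D := by
    rw [← exp_add, show -t + D = m * log (1 - x) by ring, exp_nat_mul, exp_log (by linarith)]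
  rw [hpow, ← mul_sub_one, abs_mul, abs_of_pos (exp_pos _)]
  gcongr
  calc |exp D - 1| ≤ |D| * exp |D| := abs_exp_sub_one_le_abs_mul_exp D
    _ ≤ B * exp B := by gcongr; exact (abs_nonneg _).trans hB

/-- Uniform exponential asymptotic: for every `c > 0` there are `C > 0` and a threshold `N`
such that for all `λ ∈ (0,1]`, `γ ∈ [0,1)`, `a ∈ {1,2}`, and integers `k ≤ n ≤ M` with
`n ≥ N`, `M ≥ 3` and `|M − n/λ| ≤ c n^γ`, one has
`|(1 − a/M)^(n−k) − e^{−aλ}| ≤ C e^{−aλ} (λ² n^{γ−1} + λ k n^{−1})`. -/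
theorem uniform_exp_estimate :
    ∀ c : ℝ, 0 < c → ∃ C : ℝ, 0 < C ∧ ∃ N : ℕ,
      ∀ lam γ : ℝ, 0 < lam → lam ≤ 1 → 0 ≤ γ → γ < 1 →
      ∀ a : ℕ, (a = 1 ∨ a = 2) →
      ∀ k n M : ℕ, k ≤ n → n ≤ M → N ≤ n → 3 ≤ M →
      |(M : ℝ) - (n : ℝ) / lam| ≤ c * (n : ℝ) ^ γ →
      |(1 - (a : ℝ) / (M : ℝ)) ^ (n - k) - Real.exp (-((a : ℝ) * lam))| ≤
        C * Real.exp (-((a : ℝ) * lam))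
          * (lam ^ 2 * (n : ℝ) ^ (γ - 1) + lam * (k : ℝ) / (n : ℝ)) := by
  intro c hc
  set B := 2 * c * (1 + c) + 2 * (1 + c) + 12 * (1 + c) ^ 2
  refine ⟨B * exp (2 * B), by positivity, 1, ?_⟩
  intro lam γ hlam hlam1 hγ0 hγ1 a ha k n M hkn hnM hNn hM3 hMn
  have hn : (1 : ℝ) ≤ n := by exact_mod_cast hNn
  have hk : (k : ℝ) ≤ n := by exact_mod_cast hkn
  have hM : (3 : ℝ) ≤ M := by exact_mod_cast hM3
  have ha2 : (a : ℝ) ≤ 2 := by rcases ha with rfl | rfl <;> norm_num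
  set S := lam ^ 2 * (n : ℝ) ^ (γ - 1) + lam * k / n
  have hS : S ≤ 2 := by
    have h1 : (n : ℝ) ^ (γ - 1) ≤ 1 := rpow_le_one_of_one_le_of_nonpos hn (by linarith)
    have h2 : lam * k / n ≤ 1 := by
      rw [div_le_one (by linarith)]; nlinarith
    nlinarith [pow_le_one₀ (n := 2) hlam.le hlam1,
      rpow_nonneg (by linarith : (0 : ℝ) ≤ n) (γ - 1)]
  have hD := abs_sub_mul_log_one_sub_div_add_le hc.le hlam hγ0 hγ1.le (Nat.cast_nonneg a) ha2
    (Nat.cast_nonneg k) hk hn (by exact_mod_cast hnM) hM hMn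
  rw [← Nat.cast_sub hkn] at hD
  have hx : (a : ℝ) / M < 1 := by rw [div_lt_one (by linarith)]; linarith
  calc _ ≤ exp (-(a * lam)) * (B * S * exp (B * S)) := abs_pow_sub_exp_neg_le hx _ hD
    _ ≤ exp (-(a * lam)) * (B * S * exp (2 * B)) := by
        gcongr _ * (_ * exp ?_)
        linarith [mul_le_mul_of_nonneg_left hS (by positivity : 0 ≤ B)]
    _ = _ := by ring
end

section
/- Let p be a prime with p ≡ 3 (mod 4) and set m = (p+1)/2. Then m! ≡ m (mod p) or m! ≡ m − 1 (mod p). -/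
/-!
Pairing `k` with `p - k` in Wilson's theorem gives `(n!)² ≡ (-1)^(n+1) (mod p)` for
`p = 2n + 1`. When `p ≡ 3 (mod 4)` the number `n` is odd, so `n! ≡ ±1`. Since `m = n + 1`
satisfies `2m ≡ 1`, we get `m! = m · n! ≡ ±m`, and `-m ≡ m - 1`.
-/

open Nat

namespace ZMod

variable {p n : ℕ} [Fact p.Prime]

theorem factorial_mul_neg_one_pow_mul_factorial (hpn : 2 * n + 1 = p) :
    (n ! : ZMod p) * ((-1) ^ n * n !) = -1 := by
  have hsplit : n ! * (p - 1).descFactorial n = (p - 1)! := by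
    simpa [show p - 1 - n = n by omega] using factorial_mul_descFactorial (n := p - 1) (k := n)
      (by omega)
  rw [← cast_descFactorial (by omega), ← Nat.cast_mul, hsplit, wilsons_lemma]

theorem factorial_mul_self_eq_one (hpn : 2 * n + 1 = p) (hn : Odd n) :
    (n ! : ZMod p) * n ! = 1 := by
  have h := factorial_mul_neg_one_pow_mul_factorial hpn
  rw [hn.neg_one_pow] at h
  linear_combination -h

end ZMod

/-- For a prime `p ≡ 3 (mod 4)` and `m = (p+1)/2`, one has `m! ≡ m (mod p)` or
`m! ≡ m − 1 (mod p)`. -/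
theorem median_almost_fixed_point (p : ℕ) (hp : p.Prime) (h4 : p % 4 = 3) :
    ((((p + 1) / 2).factorial : ZMod p) = (((p + 1) / 2 : ℕ) : ZMod p)) ∨
    ((((p + 1) / 2).factorial : ZMod p) = (((p + 1) / 2 : ℕ) : ZMod p) - 1) := by
  have : Fact p.Prime := ⟨hp⟩
  obtain ⟨n, hpn, hm⟩ : ∃ n, 2 * n + 1 = p ∧ (p + 1) / 2 = n + 1 := ⟨p / 2, by omega, by omega⟩
  have hn : Odd n := ⟨p / 4, by omega⟩
  have htwo : 2 * ((n + 1 : ℕ) : ZMod p) = 1 := by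
    have hp0 : ((2 * n + 1 : ℕ) : ZMod p) = 0 := by rw [hpn, ZMod.natCast_self]
    push_cast at hp0 ⊢
    linear_combination hp0
  rw [hm, factorial_succ, Nat.cast_mul]
  rcases mul_self_eq_one_iff.mp (ZMod.factorial_mul_self_eq_one hpn hn) with h | h
  · left
    rw [h, mul_one]
  · right
    rw [h]
    linear_combination -htwo
end

section
/- Let p ≥ 3 be a prime. Then the number of fixed points of the factorial function modulo p equals one more than the number of times the residue class 1 is attained by the factorials; that is, |{x : 1 ≤ x ≤ p−1, x! ≡ x (mod p)}| = 1 + |{y : 1 ≤ y ≤ p−1, y! ≡ 1 (mod p)}|. Equivalently, the number of fixed points is r if and only if 1 is an (r−1)-ramification point of the factorial function modulo p. -/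
/-!
Since `x! = x · (x - 1)!` and `x` is a unit modulo `p` for `1 ≤ x ≤ p - 1`, the fixed points
`x` are exactly the successors of the `z ∈ [0, p - 2]` with `z! ≡ 1`. Among these, `z = 0` always
counts, and by Wilson's theorem `(p - 1)! ≡ -1 ≢ 1`, so the remaining ones are exactly the
`y ∈ [1, p - 1]` with `y! ≡ 1`.
-/

open Finset Nat

theorem Nat.cast_factorial_succ_eq_self_iff {R : Type*} [Semiring R] [IsLeftCancelMulZero R]
    {n : ℕ} (hn : ((n + 1 : ℕ) : R) ≠ 0) :
    (((n + 1)! : ℕ) : R) = (n + 1 : ℕ) ↔ ((n ! : ℕ) : R) = 1 := by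
  rw [factorial_succ, cast_mul, mul_eq_left₀ hn]

theorem ZMod.cast_factorial_pred_ne_one {p : ℕ} [Fact p.Prime] (hp : 2 < p) :
    (((p - 1)! : ℕ) : ZMod p) ≠ 1 := by
  have : Fact (2 < p) := ⟨hp⟩
  rw [ZMod.wilsons_lemma]
  exact ZMod.neg_one_ne_one

theorem Finset.card_filter_Icc_add_one (P : ℕ → Prop) [DecidablePred P] (a b : ℕ) :
    #{x ∈ Icc (a + 1) (b + 1) | P x} = #{k ∈ Icc a b | P (k + 1)} := by
  rw [← map_add_right_Icc a b 1, filter_map, card_map]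
  rfl

theorem Finset.card_filter_insert_of_pos {α : Type*} [DecidableEq α] {P : α → Prop}
    [DecidablePred P] {a : α} {s : Finset α} (ha : a ∉ s) (hPa : P a) :
    #{x ∈ insert a s | P x} = #{x ∈ s | P x} + 1 := by
  rw [filter_insert, if_pos hPa, card_insert_of_notMem (fun h => ha (mem_filter.1 h).1)]

theorem Finset.filter_insert_of_neg {α : Type*} [DecidableEq α] {P : α → Prop}
    [DecidablePred P] {a : α} (s : Finset α) (hPa : ¬P a) :
    {x ∈ insert a s | P x} = {x ∈ s | P x} := by
  rw [filter_insert, if_neg hPa]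

/-- For a prime `p ≥ 3`, the number of fixed points of the factorial function modulo `p`
(integers `1 ≤ x ≤ p−1` with `x! ≡ x (mod p)`) is one more than the number of integers
`1 ≤ y ≤ p−1` with `y! ≡ 1 (mod p)`. -/
theorem fixed_points_eq_one_add_hits_of_one (p : ℕ) (hp : p.Prime) (h3 : 3 ≤ p) :
    ((Finset.Icc 1 (p - 1)).filter
        (fun x : ℕ => ((x.factorial : ZMod p) = (x : ZMod p)))).card
      = 1 + ((Finset.Icc 1 (p - 1)).filter
        (fun y : ℕ => ((y.factorial : ZMod p) = 1))).card := by
  have : Fact p.Prime := ⟨hp⟩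
  obtain ⟨m, rfl⟩ : ∃ m, p = m + 2 := ⟨p - 2, by omega⟩
  have hunit : ∀ k ∈ Icc 0 m, ((k + 1 : ℕ) : ZMod (m + 2)) ≠ 0 := fun k hk => by
    rw [Ne, ZMod.natCast_eq_zero_iff]
    exact Nat.not_dvd_of_pos_of_lt k.succ_pos (by have := (mem_Icc.1 hk).2; omega)
  have hwilson := ZMod.cast_factorial_pred_ne_one (p := m + 2) (by omega)
  simp only [show m + 2 - 1 = m + 1 by rfl] at hwilson ⊢
  calc #{x ∈ Icc 1 (m + 1) | (x ! : ZMod (m + 2)) = x}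
      = #{k ∈ Icc 0 m | (((k + 1)! : ℕ) : ZMod (m + 2)) = (k + 1 : ℕ)} :=
        card_filter_Icc_add_one _ 0 m
    _ = #{k ∈ Icc 0 m | (k ! : ZMod (m + 2)) = 1} :=
        congrArg card (filter_congr fun k hk => cast_factorial_succ_eq_self_iff (hunit k hk))
    _ = 1 + #{k ∈ Icc 1 m | (k ! : ZMod (m + 2)) = 1} := by
        rw [← insert_Icc_add_one_left_eq_Icc (zero_le m),
          card_filter_insert_of_pos (by simp) (by simp), add_comm, zero_add]
    _ = 1 + #{y ∈ Icc 1 (m + 1) | (y ! : ZMod (m + 2)) = 1} := by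
        rw [← insert_Icc_right_eq_Icc_add_one (by omega),
          filter_insert_of_neg (P := fun y => (y ! : ZMod (m + 2)) = 1) _ hwilson]
end
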